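/- arXiv:2203.12490 — 5 statements merged into one kernel-verified Lean document; each statement's English description precedes it below -/
import Mathlib

section
/- The category 𝔾, defined as the full subcategory of the category AddCommGrp of abelian groups whose objects are the additive groups (Fin n → ZMod 2) for n : ℕ, has kernels: every morphism in 𝔾 has a kernel in 𝔾. -/
open CategoryTheory

/-- The objects of the category `𝔾`: abelian groups of the form `Fin n → ZMod 2`. -/
def IsFinitePowerOfZMod2 (A : AddCommGrpCat) : Prop :=
  ∃ n : ℕ, A = AddCommGrpCat.of (Fin n → ZMod 2)

/-- The category `𝔾`: the full subcategory of `AddCommGrp` on the finite direct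
powers of `ℤ/2ℤ`. -/
abbrev GCat := ObjectProperty.FullSubcategory IsFinitePowerOfZMod2

/-!
A subgroup of `(ℤ/2ℤ)ⁿ` is an `𝔽₂`-subspace, hence isomorphic to `(ℤ/2ℤ)ᵐ` for some `m`. So the
kernel of a map in `𝔾`, computed in `AddCommGrp`, is isomorphic to an object of `𝔾`; since the
inclusion of a full subcategory is fully faithful, it reflects this kernel back into `𝔾`.
-/

open Limits

theorem CategoryTheory.Functor.hasKernel_of_iso_kernel {C D : Type*} [Category C] [Category D]
    [HasZeroMorphisms C] [HasZeroMorphisms D] (G : C ⥤ D) [G.Full] [G.Faithful]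
    [G.PreservesZeroMorphisms] {X Y : C} (f : X ⟶ Y) [HasKernel (G.map f)] {K : C}
    (e : G.obj K ≅ Limits.kernel (G.map f)) : HasKernel f := by
  let ι : K ⟶ X := G.preimage (e.hom ≫ kernel.ι _)
  have w : ι ≫ f = 0 := G.map_injective (by simp [ι])
  have hι : IsLimit (KernelFork.ofι (G.map ι) (by simp [← G.map_comp, w]) :
      KernelFork (G.map f)) :=
    (kernelIsKernel _).ofIsoLimit (Fork.ext e.symm (by simp [ι]))
  exact HasLimit.mk ⟨_, isLimitOfReflects G ((isLimitMapConeForkEquiv' G w).symm hι)⟩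

theorem AddSubgroup.exists_addEquiv_fin_pi_zmod {p : ℕ} [Fact p.Prime] {V : Type*}
    [AddCommGroup V] [Module (ZMod p) V] [Module.Finite (ZMod p) V] (H : AddSubgroup V) :
    ∃ m : ℕ, Nonempty (H ≃+ (Fin m → ZMod p)) :=
  ⟨_, ⟨(Module.finBasis (ZMod p) (H.toZModSubmodule p)).equivFun.toAddEquiv⟩⟩

theorem stmt_3 : Limits.HasKernels GCat := by
  refine ⟨fun {X Y} f => ?_⟩
  obtain ⟨_, n, rfl⟩ := X
  obtain ⟨m, ⟨e⟩⟩ :=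
    AddSubgroup.exists_addEquiv_fin_pi_zmod (p := 2) (V := Fin n → ZMod 2) f.hom.hom.ker
  exact (ObjectProperty.ι _).hasKernel_of_iso_kernel f (K := ⟨_, m, rfl⟩)
    (e.symm.toAddCommGrpIso ≪≫ (AddCommGrpCat.kernelIsoKer _).symm)
end

section
/- The category 𝔾, defined as the full subcategory of the category AddCommGrp of abelian groups whose objects are the additive groups (Fin n → ZMod 2) for n : ℕ, has cokernels: every morphism in 𝔾 has a cokernel in 𝔾. -/
/-!
An abelian group is isomorphic to some `(ℤ/2ℤ)ⁿ` exactly when it is finite and killed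
by `2`, i.e. a finite-dimensional `ZMod 2`-vector space. That property passes to quotients,
so the cokernel in `AddCommGrp` of a map in `𝔾` is isomorphic to an object of `𝔾`; as `𝔾`
is a full subcategory, it is then also a cokernel in `𝔾`.
-/

open CategoryTheory

open Limits

namespace CategoryTheory.ObjectProperty

variable {C : Type*} [Category C] [HasZeroMorphisms C] {P : ObjectProperty C}

lemma hasCokernel_of_isoClosure {X Y : P.FullSubcategory} (f : X ⟶ Y) [HasCokernel f.hom]
    (h : P.isoClosure (cokernel f.hom)) : HasCokernel f := by
  obtain ⟨Z, hZ, ⟨e⟩⟩ := h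
  have := P.hasColimit_parallelPair_comp_ι f
  have : CreatesColimit (parallelPair f 0) P.ι :=
    createsColimitOfFullyFaithfulOfIso ⟨Z, hZ⟩
      (e.symm ≪≫
        HasColimit.isoOfNatIso (diagramIsoParallelPair (parallelPair f 0 ⋙ P.ι)).symm)
  exact hasColimit_of_created _ P.ι

lemma hasCokernels_of_isClosedUnderCokernels_isoClosure [HasCokernels C]
    [P.isoClosure.IsClosedUnderCokernels] : HasCokernels P.FullSubcategory where
  has_colimit {X Y} f := hasCokernel_of_isoClosure f <|
    P.isoClosure.prop_cokernel f.hom (P.le_isoClosure _ X.property) (P.le_isoClosure _ Y.property)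

end CategoryTheory.ObjectProperty

theorem AddCommGroup.exists_addEquiv_fin_zmod {p : ℕ} [Fact p.Prime] {A : Type*}
    [AddCommGroup A] [Finite A] (hA : ∀ x : A, p • x = 0) :
    ∃ n : ℕ, Nonempty (A ≃+ (Fin n → ZMod p)) := by
  let _ := AddCommGroup.zmodModule hA
  have : Module.Finite (ZMod p) A := .of_finite
  -- For a variable `p`, instance search does not unify the `Semiring (ZMod p)` coming from
  -- `ZMod.instField p` with the one of `zmodModule`, so the instances are passed by hand.
  let b := @Module.finBasis (ZMod p) A _ _ ‹_› (.of_divisionRing _ _) _ ‹_›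
  exact ⟨_, ⟨b.equivFun.toAddEquiv⟩⟩

lemma isoClosure_isFinitePowerOfZMod2_iff (A : AddCommGrpCat) :
    ObjectProperty.isoClosure IsFinitePowerOfZMod2 A ↔ Finite A ∧ ∀ x : A, 2 • x = 0 := by
  constructor
  · rintro ⟨_, ⟨n, rfl⟩, ⟨e⟩⟩
    let e' := e.addCommGroupIsoToAddEquiv
    refine ⟨e'.finite_iff.mpr inferInstance, fun x => e'.injective ?_⟩
    rw [map_nsmul, map_zero, two_nsmul]
    exact funext fun i => CharTwo.add_self_eq_zero (e' x i)
  · rintro ⟨_, hA⟩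
    obtain ⟨n, ⟨e⟩⟩ := AddCommGroup.exists_addEquiv_fin_zmod hA
    exact ⟨_, ⟨n, rfl⟩, ⟨e.toAddCommGrpIso⟩⟩

instance : (ObjectProperty.isoClosure IsFinitePowerOfZMod2).IsClosedUnderQuotients where
  prop_of_epi {A B} p hp hA := by
    rw [isoClosure_isFinitePowerOfZMod2_iff] at hA ⊢
    obtain ⟨_, hA⟩ := hA
    have hsurj : Function.Surjective p := (AddCommGrpCat.epi_iff_surjective p).mp hp
    refine ⟨Finite.of_surjective p hsurj, fun b => ?_⟩
    obtain ⟨a, rfl⟩ := hsurj b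
    rw [← map_nsmul, hA, map_zero]

theorem stmt_4 : Limits.HasCokernels GCat :=
  ObjectProperty.hasCokernels_of_isClosedUnderCokernels_isoClosure
end

section
/- Let C be a small category with all finite limits and let u : C ⥤ Type be a functor preserving finite limits. Then the stalk functor from presheaves to Type, sending F : Cᵒᵖ ⥤ Type to the colimit of the composite of the opposite of the projection u.Elements ⥤ C with F (i.e. F ↦ colim over (u.Elements)ᵒᵖ of F(U)), preserves finite limits. -/
open CategoryTheory Limits

/-- The stalk functor associated to a functor `u : C ⥤ Type`: it sends a presheaf
`F : Cᵒᵖ ⥤ Type` to the colimit of `F` over the (opposite of the) category of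
elements of `u`. -/
noncomputable def stalkFunctor {C : Type} [SmallCategory C] (u : C ⥤ Type) :
    (Cᵒᵖ ⥤ Type) ⥤ Type :=
  (Functor.whiskeringLeft u.Elementsᵒᵖ Cᵒᵖ Type).obj (CategoryOfElements.π u).op ⋙ colim

theorem stmt_10 (C : Type) [SmallCategory C] [HasFiniteLimits C]
    (u : C ⥤ Type) [PreservesFiniteLimits u] :
    PreservesFiniteLimits (stalkFunctor u) := by
  have : IsCofiltered u.Elements := u.isCofiltered_elements
  -- Restriction along `π.op` preserves all limits, and colimits over the filtered
  -- category `u.Elementsᵒᵖ` commute with finite limits in `Type`.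
  exact comp_preservesFiniteLimits _ _
end

section
/- Let (C, J) be a small site where C has all finite limits, and let (u_k : C ⥤ Type)_{k ∈ K} be a family of functors such that each u_k preserves finite limits and, for every J-covering family {U_i → U}, the induced map from the disjoint union of the sets u_k.obj U_i to u_k.obj U is surjective. Suppose that for every J-sheaf of types F, every object U of C and all s, s' ∈ F.obj (op U), there exist k ∈ K and x ∈ u_k.obj U such that equality of the germs of s and s' at (U, x) in the stalk of F at u_k implies s = s'. Then the family is conservative: for every morphism Φ : F ⟶ G of J-sheaves of types, if for every k ∈ K the induced map between the stalks of F and G at u_k is a bijection, then Φ is an isomorphism of sheaves. -/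
/-! Separation by germs makes morphisms into a sheaf determined by their maps on stalks. Hence
stalkwise injectivity of `Φ` lets it be cancelled on the right and stalkwise surjectivity on the
left, and a morphism that is both mono and epi in the balanced category of sheaves of types is an
isomorphism. -/

open CategoryTheory Limits Opposite

/-- The stalk of a presheaf `F : Cᵒᵖ ⥤ Type` at a functor `u : C ⥤ Type`: the colimit
of `F` over the (opposite of the) category of elements of `u`. -/
noncomputable def pointStalk {C : Type} [SmallCategory C] (u : C ⥤ Type)
    (F : Cᵒᵖ ⥤ Type) : Type :=
  colimit ((CategoryOfElements.π u).op ⋙ F)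

/-- The germ of a section `s ∈ F(U)` at the element `x ∈ u.obj U`. -/
noncomputable def germ {C : Type} [SmallCategory C] (u : C ⥤ Type) (F : Cᵒᵖ ⥤ Type)
    (U : C) (x : u.obj U) (s : F.obj (op U)) : pointStalk u F :=
  colimit.ι ((CategoryOfElements.π u).op ⋙ F) (op ⟨U, x⟩) s

/-- The map induced on stalks at `u` by a morphism of presheaves, given by
functoriality of the colimit. -/
noncomputable def stalkMap {C : Type} [SmallCategory C] (u : C ⥤ Type)
    {F G : Cᵒᵖ ⥤ Type} (φ : F ⟶ G) : pointStalk u F → pointStalk u G :=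
  colimMap (Functor.whiskerLeft (CategoryOfElements.π u).op φ)

section

variable {C : Type} [SmallCategory C] (u : C ⥤ Type)

lemma stalkMap_germ {F G : Cᵒᵖ ⥤ Type} (φ : F ⟶ G) (U : C) (x : u.obj U)
    (s : F.obj (op U)) :
    stalkMap u φ (germ u F U x s) = germ u G U x (φ.app (op U) s) :=
  ConcreteCategory.congr_hom
    (ι_colimMap (Functor.whiskerLeft (CategoryOfElements.π u).op φ) (op ⟨U, x⟩)) s

lemma stalkMap_comp {F G H : Cᵒᵖ ⥤ Type} (φ : F ⟶ G) (ψ : G ⟶ H) :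
    stalkMap u (φ ≫ ψ) = stalkMap u ψ ∘ stalkMap u φ :=
  funext fun t => ConcreteCategory.congr_hom
    (colim.map_comp (Functor.whiskerLeft (CategoryOfElements.π u).op φ)
      (Functor.whiskerLeft (CategoryOfElements.π u).op ψ)) t

end

variable {C : Type} [SmallCategory C] {K : Type} (u : K → C ⥤ Type)

def IsSeparatedByGerms (H : Cᵒᵖ ⥤ Type) : Prop :=
  ∀ (U : C) (s s' : H.obj (op U)), ∃ (k : K) (x : (u k).obj U),
    germ (u k) H U x s = germ (u k) H U x s' → s = s'

variable {u}

lemma IsSeparatedByGerms.hom_ext {F H : Cᵒᵖ ⥤ Type} (hH : IsSeparatedByGerms u H)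
    {f g : F ⟶ H} (h : ∀ k, stalkMap (u k) f = stalkMap (u k) g) : f = g := by
  ext ⟨U⟩ s
  obtain ⟨k, x, hk⟩ := hH U (f.app (op U) s) (g.app (op U) s)
  exact hk (by rw [← stalkMap_germ, ← stalkMap_germ, h])

variable {J : GrothendieckTopology C}

lemma mono_of_injective_stalkMap {F G : Sheaf J Type} (Φ : F ⟶ G)
    (hF : IsSeparatedByGerms u F.obj) (hΦ : ∀ k, Function.Injective (stalkMap (u k) Φ.hom)) :
    Mono Φ where
  right_cancellation a b hab := by
    refine Sheaf.hom_ext (hF.hom_ext fun k => (hΦ k).comp_left ?_)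
    dsimp only
    rw [← stalkMap_comp, ← stalkMap_comp]
    exact congrArg (fun c => stalkMap (u k) c.hom) hab

lemma epi_of_surjective_stalkMap {F G : Sheaf J Type} (Φ : F ⟶ G)
    (hsep : ∀ H : Sheaf J Type, IsSeparatedByGerms u H.obj)
    (hΦ : ∀ k, Function.Surjective (stalkMap (u k) Φ.hom)) : Epi Φ where
  left_cancellation a b hab := by
    refine Sheaf.hom_ext ((hsep _).hom_ext fun k => (hΦ k).injective_comp_right ?_)
    dsimp only
    rw [← stalkMap_comp, ← stalkMap_comp]
    exact congrArg (fun c => stalkMap (u k) c.hom) hab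

theorem stmt_11_general (C : Type) [SmallCategory C]
    (J : GrothendieckTopology C) (K : Type) (u : K → C ⥤ Type)
    (hsep : ∀ (F : Sheaf J Type) (U : C) (s s' : F.val.obj (op U)),
      ∃ (k : K) (x : (u k).obj U),
        germ (u k) F.val U x s = germ (u k) F.val U x s' → s = s')
    {F G : Sheaf J Type} (Φ : F ⟶ G)
    (hΦ : ∀ k, Function.Bijective (stalkMap (u k) Φ.hom)) :
    IsIso Φ := by
  have := mono_of_injective_stalkMap Φ (hsep F) fun k => (hΦ k).injective
  have := epi_of_surjective_stalkMap Φ hsep fun k => (hΦ k).surjective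
  exact isIso_of_mono_of_epi Φ

theorem stmt_11 (C : Type) [SmallCategory C] [HasFiniteLimits C]
    (J : GrothendieckTopology C) (K : Type) (u : K → C ⥤ Type)
    (hpres : ∀ k, PreservesFiniteLimits (u k))
    (hcov : ∀ k (U : C) (S : Sieve U), S ∈ J U → ∀ y : (u k).obj U,
      ∃ (V : C) (f : V ⟶ U) (_ : S f) (x : (u k).obj V), (u k).map f x = y)
    (hsep : ∀ (F : Sheaf J Type) (U : C) (s s' : F.val.obj (op U)),
      ∃ (k : K) (x : (u k).obj U),
        germ (u k) F.val U x s = germ (u k) F.val U x s' → s = s')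
    {F G : Sheaf J Type} (Φ : F ⟶ G)
    (hΦ : ∀ k, Function.Bijective (stalkMap (u k) Φ.hom)) :
    IsIso Φ :=
  stmt_11_general C J K u hsep Φ hΦ
end

section
/- Let C be a small preregular category with all finite limits, equipped with the regular topology (the Grothendieck topology whose covering families are generated by single effective epimorphisms). Then for every object U of C there exist a functor u : C ⥤ Type preserving finite limits such that u sends every effective epimorphism of C to a surjective map, together with an element x₀ ∈ u.obj U, such that for every sheaf of types F on (C, regular topology), the germ map F.obj (op U) → (stalk of F at u), sending s to the germ of s at (U, x₀), is injective. -/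
open CategoryTheory Limits Opposite

/-!
Starting from the one-object diagram at `U`, we build codirected diagrams `G : I ⥤ C` all of whose
structure maps `G i ⟶ U` are regular covers; each stage adjoins, for every finite set of lifting
problems `(g : G i ⟶ Y, f : X ↠ Y)` with `f` an effective epimorphism, the wide pullback over some
`G k` solving them at once. The sequential colimit `u` of the functors `colim_i Hom(G i, -)` is a
filtered colimit of flat functors, hence preserves finite limits, and it sends effective
epimorphisms to surjections because every problem posed at one stage is solved at the next.
Let `x₀` be the class of the structure maps `G i ⟶ U`. Equality in a filtered colimit is witnessed
at some index, where a cover of `U` factors through `f`; so `u(f)(y) = x₀` forces `f` to be a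
regular cover. Two sections with the same germ at `(U, x₀)` therefore agree after restriction
along a cover, hence agree in a sheaf.
-/

namespace RegularSite

section CoveringMorphism

variable {C : Type*} [Category C] (J : GrothendieckTopology C)

def IsCoveringMorphism {V W : C} (f : V ⟶ W) : Prop :=
  Sieve.generateSingleton f ∈ J W

variable {J}

lemma IsCoveringMorphism.id (X : C) : IsCoveringMorphism J (𝟙 X) :=
  J.superset_covering (fun _ g _ => show ∃ e, e ≫ 𝟙 X = g from ⟨g, Category.comp_id g⟩)
    (J.top_mem X)

lemma IsCoveringMorphism.of_comp {X Y Z : C} {f : X ⟶ Y} {g : Y ⟶ Z}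
    (h : IsCoveringMorphism J (f ≫ g)) : IsCoveringMorphism J g :=
  J.superset_covering (S := Sieve.generateSingleton (f ≫ g))
    (fun _ _ ⟨e, he⟩ => ⟨e ≫ f, by rw [Category.assoc, he]⟩) h

lemma IsCoveringMorphism.comp {X Y Z : C} {f : X ⟶ Y} {g : Y ⟶ Z}
    (hf : IsCoveringMorphism J f) (hg : IsCoveringMorphism J g) :
    IsCoveringMorphism J (f ≫ g) := by
  refine J.transitive hg _ fun _ _ ⟨a, ha⟩ => ?_
  refine J.superset_covering ?_ (J.pullback_stable a hf)
  rintro _ z ⟨w, hw⟩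
  exact ⟨w, by rw [← ha, ← Category.assoc, hw, Category.assoc]⟩

lemma IsCoveringMorphism.pullback_fst {X Y Z : C} (f : X ⟶ Z) {g : Y ⟶ Z} [HasPullback f g]
    (hg : IsCoveringMorphism J g) : IsCoveringMorphism J (pullback.fst f g) :=
  J.superset_covering (S := (Sieve.generateSingleton g).pullback f)
    (fun _ z ⟨w, hw⟩ => ⟨pullback.lift z w hw.symm, pullback.lift_fst _ _ _⟩)
    (J.pullback_stable f hg)

lemma IsCoveringMorphism.widePullback_base {ι : Type*} [Finite ι] {B : C} {X : ι → C}
    (f : ∀ i, X i ⟶ B) [HasWidePullback B X f] (hf : ∀ i, IsCoveringMorphism J (f i)) :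
    IsCoveringMorphism J (WidePullback.base f) := by
  have := Fintype.ofFinite ι
  have hinf : Finset.univ.inf (fun i => Sieve.generateSingleton (f i)) ∈ J B :=
    Finset.inf_induction (J.top_mem B) (fun _ h₁ _ h₂ => J.intersection_covering h₁ h₂)
      (fun i _ => hf i)
  refine J.superset_covering (fun Z g hg => ?_) hinf
  have hgi (i : ι) : ∃ e : Z ⟶ X i, e ≫ f i = g :=
    Finset.inf_le (f := fun i => Sieve.generateSingleton (f i)) (Finset.mem_univ i) _ hg
  choose e he using hgi
  exact ⟨WidePullback.lift g e he, WidePullback.lift_base f g e he⟩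

lemma IsCoveringMorphism.injective_map {P : Cᵒᵖ ⥤ Type*} (hP : Presieve.IsSheaf J P)
    {X Y : C} {f : X ⟶ Y} (hf : IsCoveringMorphism J f) : Function.Injective (P.map f.op) := by
  intro s t hst
  refine (hP.isSeparated _ hf).ext fun Z g ⟨e, he⟩ => ?_
  rw [← he, op_comp, Functor.map_comp_apply, Functor.map_comp_apply, hst]

lemma IsCoveringMorphism.of_effectiveEpi [Preregular C] {X Y : C} (f : X ⟶ Y) [EffectiveEpi f] :
    IsCoveringMorphism (regularTopology C) f :=
  regularTopology.mem_sieves_of_hasEffectiveEpi _ ⟨X, f, inferInstance, 𝟙 X, Category.id_comp f⟩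

end CoveringMorphism

theorem germ_injective {C : Type} [SmallCategory C] {J : GrothendieckTopology C}
    {u : C ⥤ Type} [IsCofiltered u.Elements] {U : C} {x₀ : u.obj U}
    (hx₀ : ∀ ⦃V : C⦄ (f : V ⟶ U) (y : u.obj V), u.map f y = x₀ → IsCoveringMorphism J f)
    {P : Cᵒᵖ ⥤ Type} (hP : Presieve.IsSheaf J P) : Function.Injective (germ u P U x₀) := by
  intro s t hst
  obtain ⟨_, e, he⟩ := (Types.FilteredColimit.isColimit_eq_iff'
    (colimit.isColimit ((CategoryOfElements.π u).op ⋙ P)) (i := op ⟨U, x₀⟩) s t).1 hst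
  exact (hx₀ _ _ e.unop.2).injective_map hP he

lemma preservesFiniteLimits_flip_comp_colim {C K : Type} [Category C] [SmallCategory K]
    [IsFiltered K] (F : K ⥤ C ⥤ Type) [∀ k, PreservesFiniteLimits (F.obj k)] :
    PreservesFiniteLimits (F.flip ⋙ colim) :=
  have : PreservesFiniteLimits F.flip := ⟨fun _ _ _ => preservesLimitsOfShape_of_evaluation _ _
    fun k => preservesLimitsOfShape_of_natIso (flipCompEvaluation F k).symm⟩
  comp_preservesFiniteLimits _ _

noncomputable section

variable {C : Type} [SmallCategory C]

-- The paper's pair `(𝕀, G_𝕀)`, with the structure maps `π` to `U` recorded.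
structure CoverSystem (J : GrothendieckTopology C) (U : C) where
  I : Type
  [preorder : Preorder I]
  [isCodirectedOrder : IsCodirectedOrder I]
  [nonempty : Nonempty I]
  diagram : I ⥤ C
  π : diagram ⟶ (Functor.const I).obj U
  isCoveringMorphism_π (i : I) : IsCoveringMorphism J (π.app i)

namespace CoverSystem

attribute [instance] preorder isCodirectedOrder nonempty

variable {J : GrothendieckTopology C} {U : C} (P : CoverSystem J U)

def point : C ⥤ Type := (P.diagram.op ⋙ coyoneda).flip ⋙ colim

instance : PreservesFiniteLimits P.point :=
  have (i : P.Iᵒᵖ) : PreservesFiniteLimits ((P.diagram.op ⋙ coyoneda).obj i) :=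
    inferInstanceAs (PreservesFiniteLimits (coyoneda.obj _))
  preservesFiniteLimits_flip_comp_colim _

variable {P} in
def pointMk {i : P.I} {X : C} (f : P.diagram.obj i ⟶ X) : P.point.obj X :=
  colimit.ι ((P.diagram.op ⋙ coyoneda).flip.obj X) (op i) f

lemma exists_pointMk_eq {X : C} (x : P.point.obj X) :
    ∃ (i : P.I) (f : P.diagram.obj i ⟶ X), pointMk f = x := by
  obtain ⟨i, f, rfl⟩ := Types.jointly_surjective' x
  exact ⟨i.unop, f, rfl⟩

lemma point_map_pointMk {i : P.I} {X Y : C} (f : P.diagram.obj i ⟶ X) (g : X ⟶ Y) :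
    P.point.map g (pointMk f) = pointMk (f ≫ g) :=
  colimit.ι_map_apply ((P.diagram.op ⋙ coyoneda).flip.map g) (op i) f

lemma pointMk_diagram_map_comp {i j : P.I} (h : i ⟶ j) {X : C} (f : P.diagram.obj j ⟶ X) :
    pointMk (P.diagram.map h ≫ f) = pointMk f :=
  colimit.w_apply ((P.diagram.op ⋙ coyoneda).flip.obj X) h.op f

lemma exists_of_pointMk_eq_pointMk {i j : P.I} {X : C} {f : P.diagram.obj i ⟶ X}
    {g : P.diagram.obj j ⟶ X} (h : pointMk f = pointMk g) :
    ∃ (k : P.I) (a : k ⟶ i) (b : k ⟶ j), P.diagram.map a ≫ f = P.diagram.map b ≫ g := by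
  obtain ⟨k, a, b, hab⟩ := (Types.FilteredColimit.colimit_eq_iff _).1 h
  exact ⟨k.unop, a.unop, b.unop, hab⟩

def basepoint : P.point.obj U := pointMk (P.π.app (Classical.arbitrary P.I))

lemma pointMk_π (i : P.I) : pointMk (P.π.app i) = P.basepoint := by
  obtain ⟨k, a, b⟩ := exists_le_le i (Classical.arbitrary P.I)
  rw [basepoint, ← P.pointMk_diagram_map_comp (homOfLE a),
    ← P.pointMk_diagram_map_comp (homOfLE b), P.π.naturality, P.π.naturality]
  rfl

lemma isCoveringMorphism_of_point_map_eq {V : C} (f : V ⟶ U) (y : P.point.obj V)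
    (hy : P.point.map f y = P.basepoint) : IsCoveringMorphism J f := by
  obtain ⟨i, g, rfl⟩ := P.exists_pointMk_eq y
  rw [point_map_pointMk, ← P.pointMk_π i] at hy
  obtain ⟨k, a, b, hab⟩ := P.exists_of_pointMk_eq_pointMk hy
  have hπ : P.diagram.map b ≫ P.π.app i = P.π.app k :=
    (P.π.naturality b).trans (Category.comp_id _)
  refine IsCoveringMorphism.of_comp (f := P.diagram.map a ≫ g) ?_
  rw [Category.assoc, hab, hπ]
  exact P.isCoveringMorphism_π k

variable {P} {Q : CoverSystem J U}

structure Hom (P Q : CoverSystem J U) where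
  functor : P.I ⥤ Q.I
  hom : functor ⋙ Q.diagram ⟶ P.diagram
  hom_π (i : P.I) : hom.app i ≫ P.π.app i = Q.π.app (functor.obj i)

def Hom.pointMapApp (φ : Hom P Q) (X : C) : P.point.obj X ⟶ Q.point.obj X :=
  colimit.desc _
    { pt := Q.point.obj X
      ι :=
        { app i := TypeCat.ofHom fun f => pointMk (φ.hom.app i.unop ≫ f)
          naturality i i' h := by
            ext f
            simpa [← φ.hom.naturality_assoc] using Q.pointMk_diagram_map_comp
              (φ.functor.map h.unop) (φ.hom.app i.unop ≫ f) } }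

lemma Hom.pointMapApp_pointMk (φ : Hom P Q) {i : P.I} {X : C} (f : P.diagram.obj i ⟶ X) :
    φ.pointMapApp X (pointMk f) = pointMk (φ.hom.app i ≫ f) :=
  colimit.ι_desc_apply _ _ _

def Hom.pointMap (φ : Hom P Q) : P.point ⟶ Q.point where
  app := φ.pointMapApp
  naturality X Y g := by
    ext x
    obtain ⟨i, f, rfl⟩ := P.exists_pointMk_eq x
    simp [Hom.pointMapApp_pointMk, point_map_pointMk]

lemma Hom.pointMap_basepoint (φ : Hom P Q) : φ.pointMap.app U P.basepoint = Q.basepoint := by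
  rw [basepoint, Hom.pointMap, Hom.pointMapApp_pointMk, Hom.hom_π, pointMk_π]

section Step

variable [HasFiniteLimits C] [Preregular C] (P : CoverSystem (regularTopology C) U)

structure LiftingProblem where
  i : P.I
  {Y X : C}
  g : P.diagram.obj i ⟶ Y
  f : X ⟶ Y
  [effectiveEpi : EffectiveEpi f]

attribute [instance] LiftingProblem.effectiveEpi

-- `⟨k, S⟩` indexes the wide pullback over `G k` that solves every problem in `S`.
structure StepIndex where
  base : P.I
  problems : Finset P.LiftingProblem
  base_le (p : P.LiftingProblem) : p ∈ problems → base ≤ p.i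

namespace StepIndex

variable {P}

def ofIndex (i : P.I) : P.StepIndex := ⟨i, ∅, by simp⟩

variable (a : P.StepIndex)

abbrev problemPullback (p : a.problems) : C :=
  pullback (P.diagram.map (homOfLE (a.base_le p.1 p.2)) ≫ p.1.g) p.1.f

abbrev solution : C := widePullback (P.diagram.obj a.base) a.problemPullback (fun _ => pullback.fst _ _)

abbrev toBase : a.solution ⟶ P.diagram.obj a.base := WidePullback.base _

def leg {p : P.LiftingProblem} (hp : p ∈ a.problems) : a.solution ⟶ p.X :=
  WidePullback.π _ ⟨p, hp⟩ ≫ pullback.snd _ _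

lemma leg_f {p : P.LiftingProblem} (hp : p ∈ a.problems) :
    a.leg hp ≫ p.f = a.toBase ≫ P.diagram.map (homOfLE (a.base_le p hp)) ≫ p.g := by
  rw [leg, Category.assoc, ← pullback.condition, WidePullback.π_arrow_assoc]

instance : Preorder P.StepIndex where
  le a b := a.base ≤ b.base ∧ b.problems ⊆ a.problems
  le_refl a := ⟨le_rfl, subset_rfl⟩
  le_trans _ _ _ hab hbc := ⟨hab.1.trans hbc.1, hbc.2.trans hab.2⟩

instance : Nonempty P.StepIndex := ⟨ofIndex (Classical.arbitrary P.I)⟩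

open scoped Classical in
instance : IsCodirectedOrder P.StepIndex where
  directed a b := by
    obtain ⟨k, hka, hkb⟩ := exists_le_le a.base b.base
    refine ⟨⟨k, a.problems ∪ b.problems, fun p hp => ?_⟩, ⟨hka, Finset.subset_union_left⟩,
      ⟨hkb, Finset.subset_union_right⟩⟩
    rcases Finset.mem_union.1 hp with hp | hp
    · exact hka.trans (a.base_le p hp)
    · exact hkb.trans (b.base_le p hp)

def map {a b : P.StepIndex} (h : a ≤ b) : a.solution ⟶ b.solution :=
  WidePullback.lift (a.toBase ≫ P.diagram.map (homOfLE h.1))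
    (fun q => pullback.lift (a.toBase ≫ P.diagram.map (homOfLE h.1)) (a.leg (h.2 q.2)) (by
      simp [leg_f, ← Functor.map_comp_assoc]))
    (fun _ => pullback.lift_fst _ _ _)

@[simp]
lemma map_toBase {a b : P.StepIndex} (h : a ≤ b) :
    map h ≫ b.toBase = a.toBase ≫ P.diagram.map (homOfLE h.1) :=
  WidePullback.lift_base _ _ _ _

@[simp]
lemma map_toBase_assoc {a b : P.StepIndex} (h : a ≤ b) {Z : C} (g : P.diagram.obj b.base ⟶ Z) :
    map h ≫ b.toBase ≫ g = a.toBase ≫ P.diagram.map (homOfLE h.1) ≫ g := by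
  rw [← Category.assoc, map_toBase, Category.assoc]

@[simp]
lemma map_leg {a b : P.StepIndex} (h : a ≤ b) {p : P.LiftingProblem} (hp : p ∈ b.problems) :
    map h ≫ b.leg hp = a.leg (h.2 hp) := by
  rw [map, leg, WidePullback.lift_π_assoc, pullback.lift_snd]

lemma hom_ext {Z : C} {f g : Z ⟶ a.solution} (hbase : f ≫ a.toBase = g ≫ a.toBase)
    (hleg : ∀ p (hp : p ∈ a.problems), f ≫ a.leg hp = g ≫ a.leg hp) : f = g := by
  refine WidePullback.hom_ext _ _ _ (fun q => pullback.hom_ext ?_ ?_) hbase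
  · simpa using hbase
  · simpa [leg] using hleg q.1 q.2

end StepIndex

abbrev step : CoverSystem (regularTopology C) U where
  I := P.StepIndex
  diagram :=
    { obj a := a.solution
      map h := StepIndex.map (leOfHom h)
      map_id a := StepIndex.hom_ext _ (by simp) (by simp)
      map_comp _ _ := StepIndex.hom_ext _ (by simp [← Functor.map_comp]) (by simp) }
  π :=
    { app a := a.toBase ≫ P.π.app a.base
      naturality _ _ h := by simp }
  isCoveringMorphism_π a :=
    ((IsCoveringMorphism.widePullback_base _ fun q =>
      (IsCoveringMorphism.of_effectiveEpi q.1.f).pullback_fst _).comp (P.isCoveringMorphism_π a.base))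

def toStep : Hom P P.step where
  functor := Monotone.functor (f := StepIndex.ofIndex) fun _ _ h => ⟨h, subset_rfl⟩
  hom :=
    { app i := (StepIndex.ofIndex i).toBase
      naturality _ _ h := StepIndex.map_toBase (a := StepIndex.ofIndex _)
        (b := StepIndex.ofIndex _) ⟨leOfHom h, subset_rfl⟩ }
  hom_π _ := rfl

lemma exists_step_point_map_eq {X Y : C} (f : X ⟶ Y) [EffectiveEpi f] (y : P.point.obj Y) :
    ∃ x, P.step.point.map f x = P.toStep.pointMap.app Y y := by
  obtain ⟨i, g, rfl⟩ := P.exists_pointMk_eq y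
  let p : P.LiftingProblem := ⟨i, g, f⟩
  let a : P.step.I := ⟨i, {p}, by simp [p]⟩
  have ha : a ≤ StepIndex.ofIndex i := ⟨le_rfl, Finset.empty_subset _⟩
  refine ⟨pointMk (P := P.step) (StepIndex.leg a (Finset.mem_singleton_self p)), ?_⟩
  rw [point_map_pointMk, Hom.pointMap, Hom.pointMapApp_pointMk]
  refine Eq.trans ?_ (P.step.pointMk_diagram_map_comp (homOfLE ha) _)
  exact congrArg pointMk ((StepIndex.leg_f a _).trans (StepIndex.map_toBase_assoc ha g).symm)

end Step

end CoverSystem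

section LimitPoint

variable [HasFiniteLimits C] [Preregular C]

def stage (U : C) : ℕ → CoverSystem (regularTopology C) U
  | 0 =>
    { I := PUnit
      diagram := (Functor.const PUnit).obj U
      π := 𝟙 _
      isCoveringMorphism_π _ := .id U }
  | n + 1 => (stage U n).step

def pointSequence (U : C) : ℕ ⥤ C ⥤ Type :=
  Functor.ofSequence (X := fun n => (stage U n).point) fun n => (stage U n).toStep.pointMap

def limitPoint (U : C) : C ⥤ Type := (pointSequence U).flip ⋙ colim

variable {U : C}

instance : PreservesFiniteLimits (limitPoint U) :=
  have (n : ℕ) : PreservesFiniteLimits ((pointSequence U).obj n) :=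
    inferInstanceAs (PreservesFiniteLimits (stage U n).point)
  preservesFiniteLimits_flip_comp_colim _

def stageMap {n m : ℕ} (h : n ≤ m) : (stage U n).point ⟶ (stage U m).point :=
  (pointSequence U).map (homOfLE h)

lemma stageMap_succ (n : ℕ) :
    stageMap (U := U) (Nat.le_add_right n 1) = (stage U n).toStep.pointMap :=
  Functor.ofSequence_map_homOfLE_succ _ n

lemma stageMap_basepoint {n m : ℕ} (h : n ≤ m) :
    (stageMap h).app U (stage U n).basepoint = (stage U m).basepoint := by
  induction h with
  | refl =>
    exact congrArg (fun φ : (stage U n).point ⟶ (stage U n).point => φ.app U (stage U n).basepoint)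
      ((pointSequence U).map_id n)
  | @step m h ih =>
    have : stageMap (le_trans h (Nat.le_add_right m 1)) =
        stageMap h ≫ stageMap (U := U) (Nat.le_add_right m 1) :=
      (pointSequence U).map_comp (homOfLE h) (homOfLE (Nat.le_add_right m 1))
    rw [this, NatTrans.comp_app, types_comp_apply, ih, stageMap_succ]
    exact (stage U m).toStep.pointMap_basepoint

def limitPointMk {X : C} (n : ℕ) (x : (stage U n).point.obj X) : (limitPoint U).obj X :=
  colimit.ι ((pointSequence U).flip.obj X) n x

lemma exists_limitPointMk_eq {X : C} (x : (limitPoint U).obj X) :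
    ∃ (n : ℕ) (y : (stage U n).point.obj X), limitPointMk n y = x :=
  Types.jointly_surjective' x

lemma limitPoint_map_limitPointMk {X Y : C} (f : X ⟶ Y) (n : ℕ) (x : (stage U n).point.obj X) :
    (limitPoint U).map f (limitPointMk n x) = limitPointMk n ((stage U n).point.map f x) :=
  colimit.ι_map_apply ((pointSequence U).flip.map f) n x

lemma limitPointMk_stageMap {X : C} {n m : ℕ} (h : n ≤ m) (x : (stage U n).point.obj X) :
    limitPointMk m ((stageMap h).app X x) = limitPointMk n x :=
  colimit.w_apply ((pointSequence U).flip.obj X) (homOfLE h) x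

lemma exists_of_limitPointMk_eq_limitPointMk {X : C} {n : ℕ} {x y : (stage U n).point.obj X}
    (h : limitPointMk n x = limitPointMk n y) :
    ∃ (m : ℕ) (hm : n ≤ m), (stageMap hm).app X x = (stageMap hm).app X y := by
  obtain ⟨m, hm, h⟩ := (Types.FilteredColimit.isColimit_eq_iff'
    (colimit.isColimit ((pointSequence U).flip.obj X)) (i := n) x y).1 h
  exact ⟨m, leOfHom hm, h⟩

lemma limitPoint_map_surjective {X Y : C} (f : X ⟶ Y) [EffectiveEpi f] :
    Function.Surjective ((limitPoint U).map f) := by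
  intro y
  obtain ⟨n, y, rfl⟩ := exists_limitPointMk_eq y
  obtain ⟨x, hx⟩ : ∃ x : (stage U (n + 1)).point.obj X,
      (stage U (n + 1)).point.map f x = (stage U n).toStep.pointMap.app Y y :=
    (stage U n).exists_step_point_map_eq f y
  refine ⟨limitPointMk (n + 1) x, ?_⟩
  rw [limitPoint_map_limitPointMk, ← limitPointMk_stageMap (Nat.le_add_right n 1) y, stageMap_succ]
  exact congrArg (limitPointMk (n + 1)) hx

variable (U) in
def limitBasepoint : (limitPoint U).obj U := limitPointMk 0 (stage U 0).basepoint

lemma isCoveringMorphism_of_limitPoint_map_eq {V : C} (f : V ⟶ U) (y : (limitPoint U).obj V)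
    (hy : (limitPoint U).map f y = limitBasepoint U) :
    IsCoveringMorphism (regularTopology C) f := by
  obtain ⟨n, y, rfl⟩ := exists_limitPointMk_eq y
  rw [limitPoint_map_limitPointMk, limitBasepoint, ← limitPointMk_stageMap (Nat.zero_le n),
    stageMap_basepoint] at hy
  obtain ⟨m, hm, h⟩ := exists_of_limitPointMk_eq_limitPointMk hy
  rw [stageMap_basepoint, NatTrans.naturality_apply] at h
  exact (stage U m).isCoveringMorphism_of_point_map_eq f _ h

end LimitPoint

end

end RegularSite

theorem stmt_12 (C : Type) [SmallCategory C] [HasFiniteLimits C] [Preregular C]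
    (U : C) :
    ∃ u : C ⥤ Type, PreservesFiniteLimits u ∧
      (∀ {X Y : C} (f : X ⟶ Y), EffectiveEpi f → Function.Surjective (u.map f)) ∧
      ∃ x₀ : u.obj U, ∀ F : Sheaf (regularTopology C) Type,
        Function.Injective (fun s : F.val.obj (op U) => germ u F.val U x₀ s) := by
  have := Functor.isCofiltered_elements (RegularSite.limitPoint U)
  refine ⟨RegularSite.limitPoint U, inferInstance,
    fun f _ => RegularSite.limitPoint_map_surjective f, RegularSite.limitBasepoint U, fun F => ?_⟩
  exact RegularSite.germ_injective (fun _ => RegularSite.isCoveringMorphism_of_limitPoint_map_eq)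
    ((isSheaf_iff_isSheaf_of_type _ _).1 F.property)
end
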